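/- arXiv:2512.01733 — 2 statements merged into one kernel-verified Lean document; each statement's English description precedes it below -/
import Mathlib

section
/- (Concatenation construction.) Let Aut₁ = (L₁, χ₁, Attr₁, Q₁, {q₀₁}, F₁, Δ₁) and Aut₂ = (L₂, χ₂, Attr₂, Q₂, {q₀₂}, F₂, Δ₂) be parametric automata with disjoint state sets and single initial states, and assume that no state of F₁ has an outgoing transition in Δ₁. Let Aut' be the parametric automaton with state set Q₁ ∪ Q₂, single initial state q₀₁, final states F₂, and transitions Δ' = (Δ₁ minus all transitions whose target lies in F₁) ∪ Δ₂ ∪ { q →(t, φ, inv) q₀₂ : q →(t, φ, inv) q_f ∈ Δ₁ for some q_f ∈ F₁ }. If Aut₁ accepts a nonempty element sequence p₁ with assignment μ₁, Aut₂ accepts an element sequence p₂ with assignment μ₂, and μ₁ and μ₂ are unifiable, then Aut' accepts the concatenation p₁·p₂ with assignment μ₁ ∪ μ₂. -/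
/-!
Both runs are first read under the common extension `μ₁ ∪ μ₂`, which satisfies every
constraint either assignment satisfies. The run of `Aut₂` is copied verbatim into the
`Sum.inr` copy. In the run of `Aut₁`, the final states have no outgoing transitions, so only
the last step enters `F₁`; redirecting that step into `q₀₂` hands over to the run of `Aut₂`.
-/

/-- A property value: a string constant or a rational number. -/
inductive Val where
  | str : String → Val
  | num : ℚ → Val

def Val.asNum : Val → Option ℚ
  | .num q => some q
  | _ => none

/-- A linear term with rational coefficients over global parameters `χ`
and numeric properties `P`. -/
inductive LinTerm (χ P : Type) where
  | const : ℚ → LinTerm χ P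
  | param : ℚ → χ → LinTerm χ P
  | prop  : ℚ → P → LinTerm χ P
  | add   : LinTerm χ P → LinTerm χ P → LinTerm χ P

/-- A partial assignment of rationals to the global parameters. -/
def Assignment (χ : Type) : Type := χ → Option ℚ

def Assignment.empty (χ : Type) : Assignment χ := fun _ => none

/-- Two assignments are unifiable if they agree on the intersection of their domains. -/
def Unifiable {χ : Type} (μ₁ μ₂ : Assignment χ) : Prop :=
  ∀ x a b, μ₁ x = some a → μ₂ x = some b → a = b

/-- The common extension of two (unifiable) assignments. -/
def Assignment.union {χ : Type} (μ₁ μ₂ : Assignment χ) : Assignment χ :=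
  fun x => (μ₁ x).orElse (fun _ => μ₂ x)

/-- Evaluation of a linear term under a parameter assignment and a partial
property valuation; `none` when some needed value is undefined or non-numeric. -/
def LinTerm.eval {χ P : Type} (μ : Assignment χ) (f : P → Option Val) :
    LinTerm χ P → Option ℚ
  | .const c => some c
  | .param c x => (μ x).map (fun q => c * q)
  | .prop c p => ((f p).bind Val.asNum).map (fun q => c * q)
  | .add t₁ t₂ => do
      let a ← LinTerm.eval μ f t₁
      let b ← LinTerm.eval μ f t₂
      pure (a + b)

/-- Comparison operators for (in)equality atoms. -/
inductive Cmp where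
  | lt | le | eq | ge | gt | ne

def Cmp.holds : Cmp → ℚ → ℚ → Prop
  | .lt, a, b => a < b
  | .le, a, b => a ≤ b
  | .eq, a, b => a = b
  | .ge, a, b => a ≥ b
  | .gt, a, b => a > b
  | .ne, a, b => a ≠ b

/-- An atom of a data constraint: a string-equality between a string property and a
string constant, or an (in)equality between linear terms. -/
inductive Atom (χ P : Type) where
  | strEq : P → String → Atom χ P
  | cmp   : LinTerm χ P → Cmp → LinTerm χ P → Atom χ P

def Atom.sat {χ P : Type} (μ : Assignment χ) (f : P → Option Val) : Atom χ P → Prop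
  | .strEq p c => f p = some (.str c)
  | .cmp t₁ op t₂ => ∃ a b, LinTerm.eval μ f t₁ = some a ∧ LinTerm.eval μ f t₂ = some b ∧
      Cmp.holds op a b

/-- A data constraint: a finite conjunction (list) of atoms. `[]` is `true`. -/
abbrev Constraint (χ P : Type) : Type := List (Atom χ P)

/-- A data constraint holds when all of its atoms hold. -/
def Constraint.sat {χ P : Type} (μ : Assignment χ) (f : P → Option Val)
    (φ : Constraint χ P) : Prop := ∀ a ∈ φ, Atom.sat μ f a

/-- An element: a label (a forward label together with a Boolean flag that is `true`
for inverse labels) and a partial property valuation. -/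
def Element (L P : Type) : Type := (L × Bool) × (P → Option Val)

/-- Replace the label of an element by its inverse. -/
def Element.invert {L P : Type} (el : Element L P) : Element L P :=
  ((el.1.1, !el.1.2), el.2)

/-- A parametric automaton over forward labels `L`, global parameters `χ`,
properties `P`, with (finite) state type `Q`: initial states, final states, and
transitions carrying a forward label, a data constraint and an inverse flag. -/
structure PAutomaton (L χ P Q : Type) where
  init : Set Q
  final : Set Q
  delta : Set (Q × (L × Constraint χ P × Bool) × Q)

/-- `A.AcceptsFrom μ q p`: starting at state `q`, the automaton can read the element
sequence `p` along transitions whose labels, inverse flags, and data constraints are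
matched (constraints evaluated under `μ`), ending in a final state. -/
inductive PAutomaton.AcceptsFrom {L χ P Q : Type} (A : PAutomaton L χ P Q)
    (μ : Assignment χ) : Q → List (Element L P) → Prop
  | nil (q : Q) : q ∈ A.final → PAutomaton.AcceptsFrom A μ q []
  | cons {q q' : Q} {l : L} {φ : Constraint χ P} {inv : Bool}
      {f : P → Option Val} {rest : List (Element L P)} :
      (q, (l, φ, inv), q') ∈ A.delta →
      Constraint.sat μ f φ →
      PAutomaton.AcceptsFrom A μ q' rest →
      PAutomaton.AcceptsFrom A μ q (((l, inv), f) :: rest)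

/-- Acceptance of an element sequence with an assignment: some run from an initial
state to a final state reads the sequence. -/
def PAutomaton.Accepts {L χ P Q : Type} (A : PAutomaton L χ P Q)
    (μ : Assignment χ) (p : List (Element L P)) : Prop :=
  ∃ q₀ ∈ A.init, PAutomaton.AcceptsFrom A μ q₀ p

namespace Assignment

variable {χ : Type}

def Extends (μ ν : Assignment χ) : Prop :=
  ∀ x q, μ x = some q → ν x = some q

theorem extends_union_left (μ₁ μ₂ : Assignment χ) : μ₁.Extends (μ₁.union μ₂) := by
  intro x q hx
  simp [union, hx]

theorem extends_union_right {μ₁ μ₂ : Assignment χ} (hu : Unifiable μ₁ μ₂) :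
    μ₂.Extends (μ₁.union μ₂) := by
  intro x q hx
  cases hx₁ : μ₁ x with
  | none => simp [union, hx₁, hx]
  | some a => simp [union, hx₁, hu x a q hx₁ hx]

end Assignment

section Extends

variable {χ P : Type} {μ ν : Assignment χ} {f : P → Option Val}

theorem LinTerm.eval_of_extends (h : μ.Extends ν) :
    ∀ {t : LinTerm χ P} {a : ℚ}, t.eval μ f = some a → t.eval ν f = some a
  | .const _, _, ht => ht
  | .param _ x, _, ht => by
    simp only [LinTerm.eval, Option.map_eq_some_iff] at ht ⊢
    obtain ⟨q, hq, rfl⟩ := ht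
    exact ⟨q, h x q hq, rfl⟩
  | .prop _ _, _, ht => ht
  | .add _ _, _, ht => by
    simp only [LinTerm.eval, Option.bind_eq_bind, Option.bind_eq_some_iff] at ht ⊢
    obtain ⟨b, hb, c, hc, hbc⟩ := ht
    exact ⟨b, eval_of_extends h hb, c, eval_of_extends h hc, hbc⟩

theorem Atom.sat_of_extends (h : μ.Extends ν) :
    ∀ {a : Atom χ P}, a.sat μ f → a.sat ν f
  | .strEq _ _, ha => ha
  | .cmp _ _ _, ⟨x, y, hx, hy, hxy⟩ =>
    ⟨x, y, LinTerm.eval_of_extends h hx, LinTerm.eval_of_extends h hy, hxy⟩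

theorem Constraint.sat_of_extends (h : μ.Extends ν) {φ : Constraint χ P}
    (hφ : Constraint.sat μ f φ) : Constraint.sat ν f φ :=
  fun a ha => Atom.sat_of_extends h (hφ a ha)

end Extends

namespace PAutomaton.AcceptsFrom

variable {L χ P Q Q' : Type} {A : PAutomaton L χ P Q} {μ : Assignment χ}
  {q : Q} {p : List (Element L P)}

theorem of_extends {ν : Assignment χ} (h : μ.Extends ν) (hp : A.AcceptsFrom μ q p) :
    A.AcceptsFrom ν q p := by
  induction hp with
  | nil q hq => exact nil q hq
  | cons hδ hφ _ ih => exact cons hδ (Constraint.sat_of_extends h hφ) ih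

theorem map {B : PAutomaton L χ P Q'} (g : Q → Q')
    (hδ : ∀ q lab q', (q, lab, q') ∈ A.delta → (g q, lab, g q') ∈ B.delta)
    (hF : ∀ q ∈ A.final, g q ∈ B.final) (hp : A.AcceptsFrom μ q p) :
    B.AcceptsFrom μ (g q) p := by
  induction hp with
  | nil q hq => exact nil _ (hF q hq)
  | cons hq hφ _ ih => exact cons (hδ _ _ _ hq) hφ ih

theorem eq_nil_of_mem_final (hnoOut : ∀ q ∈ A.final, ∀ lab q', (q, lab, q') ∉ A.delta)
    (hq : q ∈ A.final) (hp : A.AcceptsFrom μ q p) : p = [] := by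
  cases hp with
  | nil => rfl
  | cons hδ => exact absurd hδ (hnoOut q hq _ _)

theorem append_of_redirect (hnoOut : ∀ q ∈ A.final, ∀ lab q', (q, lab, q') ∉ A.delta)
    {B : PAutomaton L χ P Q'} (g : Q → Q') (r : Q') {p' : List (Element L P)}
    (hδ : ∀ q lab q', (q, lab, q') ∈ A.delta → q' ∉ A.final → (g q, lab, g q') ∈ B.delta)
    (hδF : ∀ q lab q', (q, lab, q') ∈ A.delta → q' ∈ A.final → (g q, lab, r) ∈ B.delta)
    (hp : A.AcceptsFrom μ q p) (hq : q ∉ A.final) (hp' : B.AcceptsFrom μ r p') :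
    B.AcceptsFrom μ (g q) (p ++ p') := by
  induction hp with
  | nil q hF => exact absurd hF hq
  | @cons q q' _ _ _ _ rest hq' hφ hrest ih =>
    by_cases hF : q' ∈ A.final
    · obtain rfl : rest = [] := eq_nil_of_mem_final hnoOut hF hrest
      exact cons (hδF _ _ _ hq' hF) hφ hp'
    · exact cons (hδ _ _ _ hq' hF) hφ (ih hF)

end PAutomaton.AcceptsFrom

theorem concat_automaton_correct_general {L χ P Q₁ Q₂ : Type}
    (A1 : PAutomaton L χ P Q₁) (A2 : PAutomaton L χ P Q₂)
    (q01 : Q₁) (q02 : Q₂)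
    (h1 : A1.init = {q01}) (h2 : A2.init = {q02})
    (hnoOut : ∀ q ∈ A1.final, ∀ lab q', (q, lab, q') ∉ A1.delta)
    (A' : PAutomaton L χ P (Q₁ ⊕ Q₂))
    (hinit : A'.init = {Sum.inl q01})
    (hfinal : A'.final = Sum.inr '' A2.final)
    (hdelta : A'.delta =
      {tr | (∃ q lab q', (q, lab, q') ∈ A1.delta ∧ q' ∉ A1.final ∧
                tr = (Sum.inl q, lab, Sum.inl q'))
          ∨ (∃ q lab q', (q, lab, q') ∈ A2.delta ∧
                tr = (Sum.inr q, lab, Sum.inr q'))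
          ∨ (∃ q lab qf, (q, lab, qf) ∈ A1.delta ∧ qf ∈ A1.final ∧
                tr = (Sum.inl q, lab, Sum.inr q02))})
    (μ₁ μ₂ : Assignment χ) (p₁ p₂ : List (Element L P))
    (hp₁ : p₁ ≠ [])
    (hu : Unifiable μ₁ μ₂)
    (hacc1 : PAutomaton.Accepts A1 μ₁ p₁)
    (hacc2 : PAutomaton.Accepts A2 μ₂ p₂) :
    PAutomaton.Accepts A' (Assignment.union μ₁ μ₂) (p₁ ++ p₂) := by
  obtain ⟨_, hstart1, hrun1⟩ := hacc1
  obtain ⟨_, hstart2, hrun2⟩ := hacc2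
  rw [h1, Set.mem_singleton_iff] at hstart1
  rw [h2, Set.mem_singleton_iff] at hstart2
  rw [hstart1] at hrun1
  rw [hstart2] at hrun2
  have hrun2' : A'.AcceptsFrom (μ₁.union μ₂) (Sum.inr q02) p₂ :=
    (hrun2.of_extends (Assignment.extends_union_right hu)).map Sum.inr
      (fun q lab q' h => by rw [hdelta]; exact Or.inr (Or.inl ⟨q, lab, q', h, rfl⟩))
      (fun q hq => by rw [hfinal]; exact Set.mem_image_of_mem _ hq)
  have hq01 : q01 ∉ A1.final := fun hF => hp₁ (hrun1.eq_nil_of_mem_final hnoOut hF)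
  refine ⟨Sum.inl q01, by rw [hinit]; rfl, ?_⟩
  exact (hrun1.of_extends (Assignment.extends_union_left μ₁ μ₂)).append_of_redirect hnoOut
    Sum.inl (Sum.inr q02)
    (fun q lab q' h hF => by rw [hdelta]; exact Or.inl ⟨q, lab, q', h, hF, rfl⟩)
    (fun q lab q' h hF => by rw [hdelta]; exact Or.inr (Or.inr ⟨q, lab, q', h, hF, rfl⟩))
    hq01 hrun2'

/-- concatenation construction: gluing `Aut₁` (single initial state
`q₀₁`, final states without outgoing transitions) and `Aut₂` (single initial state
`q₀₂`) over the disjoint union of their state sets, redirecting into `q₀₂` every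
`Δ₁`-transition targeting `F₁`: if `Aut₁` accepts a nonempty `p₁` with `μ₁`, `Aut₂`
accepts `p₂` with `μ₂`, and `μ₁, μ₂` are unifiable, then the glued automaton accepts
`p₁ ++ p₂` with `μ₁ ∪ μ₂`. -/
theorem concat_automaton_correct {L χ P Q₁ Q₂ : Type} [Fintype Q₁] [Fintype Q₂]
    (A1 : PAutomaton L χ P Q₁) (A2 : PAutomaton L χ P Q₂)
    (q01 : Q₁) (q02 : Q₂)
    (h1 : A1.init = {q01}) (h2 : A2.init = {q02})
    (hnoOut : ∀ q ∈ A1.final, ∀ lab q', (q, lab, q') ∉ A1.delta)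
    (A' : PAutomaton L χ P (Q₁ ⊕ Q₂))
    (hinit : A'.init = {Sum.inl q01})
    (hfinal : A'.final = Sum.inr '' A2.final)
    (hdelta : A'.delta =
      {tr | (∃ q lab q', (q, lab, q') ∈ A1.delta ∧ q' ∉ A1.final ∧
                tr = (Sum.inl q, lab, Sum.inl q'))
          ∨ (∃ q lab q', (q, lab, q') ∈ A2.delta ∧
                tr = (Sum.inr q, lab, Sum.inr q'))
          ∨ (∃ q lab qf, (q, lab, qf) ∈ A1.delta ∧ qf ∈ A1.final ∧
                tr = (Sum.inl q, lab, Sum.inr q02))})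
    (μ₁ μ₂ : Assignment χ) (p₁ p₂ : List (Element L P))
    (hp₁ : p₁ ≠ [])
    (hu : Unifiable μ₁ μ₂)
    (hacc1 : PAutomaton.Accepts A1 μ₁ p₁)
    (hacc2 : PAutomaton.Accepts A2 μ₂ p₂) :
    PAutomaton.Accepts A' (Assignment.union μ₁ μ₂) (p₁ ++ p₂) :=
  concat_automaton_correct_general A1 A2 q01 q02 h1 h2 hnoOut A' hinit hfinal hdelta μ₁ μ₂ p₁ p₂ hp₁
    hu hacc1 hacc2
end

section
/- (Correctness of the strict-inequality and equality rewriting rules.) Let X be a type, let I, J, K be finite index types, and let aᵢ, bᵢ : X → ℚ for i : I, cⱼ, dⱼ : X → ℚ for j : J, and eₖ, gₖ : X → ℚ for k : K. Then for every x : X, the following are equivalent: (1) (∀ i, aᵢ x < bᵢ x) and (∀ j, cⱼ x > dⱼ x) and (∀ k, eₖ x = gₖ x); (2) there exists ε : ℚ with ε > 0 such that (∀ i, aᵢ x + ε ≤ bᵢ x) and (∀ j, cⱼ x − ε ≥ dⱼ x) and (∀ k, eₖ x ≤ gₖ x and eₖ x ≥ gₖ x). -/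
theorem Finite.exists_between_forall_lt {ι α : Type*} [Finite ι] [LinearOrder α]
    [DenselyOrdered α] [NoMaxOrder α] {a : α} {f : ι → α} (hf : ∀ i, a < f i) :
    ∃ ε, a < ε ∧ ∀ i, ε < f i := by
  cases isEmpty_or_nonempty ι with
  | inl _ =>
    obtain ⟨ε, hε⟩ := exists_gt a
    exact ⟨ε, hε, isEmptyElim⟩
  | inr _ =>
    obtain ⟨i₀, hi₀⟩ := Finite.exists_min f
    obtain ⟨ε, haε, hε⟩ := exists_between (hf i₀)
    exact ⟨ε, haε, fun i => hε.trans_le (hi₀ i)⟩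

theorem Finite.forall_lt_iff_exists_pos_forall_add_le {ι α : Type*} [Finite ι]
    [AddCommGroup α] [LinearOrder α] [IsOrderedAddMonoid α] [DenselyOrdered α] [NoMaxOrder α]
    (u v : ι → α) : (∀ i, u i < v i) ↔ ∃ ε > 0, ∀ i, u i + ε ≤ v i := by
  constructor
  · intro h
    obtain ⟨ε, hε, hgap⟩ :=
      Finite.exists_between_forall_lt (f := fun i => v i - u i) fun i => sub_pos.2 (h i)
    exact ⟨ε, hε, fun i => le_sub_iff_add_le'.1 (hgap i).le⟩
  · rintro ⟨ε, hε, h⟩ i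
    exact (lt_add_of_pos_right (u i) hε).trans_le (h i)

theorem rewriting_rules_correct_general {X I J K : Type} [Fintype I] [Fintype J]
    (a b : I → X → ℚ) (c d : J → X → ℚ) (e g : K → X → ℚ) (x : X) :
    ((∀ i, a i x < b i x) ∧ (∀ j, c j x > d j x) ∧ (∀ k, e k x = g k x)) ↔
    (∃ ε : ℚ, ε > 0 ∧ (∀ i, a i x + ε ≤ b i x) ∧ (∀ j, c j x - ε ≥ d j x) ∧
      (∀ k, e k x ≤ g k x ∧ e k x ≥ g k x)) := by
  -- The two families of strict inequalities are handled together, as one family over `I ⊕ J`.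
  have strict := Finite.forall_lt_iff_exists_pos_forall_add_le
    (Sum.elim (a · x) (d · x)) (Sum.elim (b · x) (c · x))
  simp only [Sum.forall, Sum.elim_inl, Sum.elim_inr] at strict
  simp only [gt_iff_lt, ge_iff_le, le_sub_iff_add_le, ← le_antisymm_iff, ← and_assoc, strict,
    exists_and_right]

/-- correctness of the strict-inequality and equality rewriting rules:
for finitely many constraints, the conjunction of the strict inequalities
`aᵢ x < bᵢ x`, `cⱼ x > dⱼ x` and the equalities `eₖ x = gₖ x` holds iff there is a
single rational `ε > 0` with `aᵢ x + ε ≤ bᵢ x`, `cⱼ x − ε ≥ dⱼ x`, and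
`eₖ x ≤ gₖ x ∧ eₖ x ≥ gₖ x`. -/
theorem rewriting_rules_correct {X I J K : Type} [Fintype I] [Fintype J] [Fintype K]
    (a b : I → X → ℚ) (c d : J → X → ℚ) (e g : K → X → ℚ) (x : X) :
    ((∀ i, a i x < b i x) ∧ (∀ j, c j x > d j x) ∧ (∀ k, e k x = g k x)) ↔
    (∃ ε : ℚ, ε > 0 ∧ (∀ i, a i x + ε ≤ b i x) ∧ (∀ j, c j x - ε ≥ d j x) ∧
      (∀ k, e k x ≤ g k x ∧ e k x ≥ g k x)) :=
  rewriting_rules_correct_general a b c d e g x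
end
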